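/- Let x ∈ L²(Ω, ℝ^m) and z ∈ L²(Ω, ℝ^q). Then ‖x − E_{xz}(E_{zz})^† z‖²_Ω = tr(E_{xx}) − ‖E_{xz}(E_{zz}^{1/2})^†‖², where ‖·‖ is the Frobenius norm. -/

import Mathlib

open MeasureTheory Matrix Finset Filter

noncomputable section

/-- The covariance matrix `E_{xy}` of two random vectors. -/
def covM {Ω : Type} [MeasurableSpace Ω] (μ : Measure Ω) {m n : ℕ}
    (x : Ω → Fin m → ℝ) (y : Ω → Fin n → ℝ) : Matrix (Fin m) (Fin n) ℝ :=
  Matrix.of fun i j => ∫ ω, x ω i * y ω j ∂μ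

/-- The squared norm `‖x‖²_Ω` of a random vector. -/
def sqnormOm {Ω : Type} [MeasurableSpace Ω] (μ : Measure Ω) {m : ℕ}
    (x : Ω → Fin m → ℝ) : ℝ :=
  ∫ ω, ∑ j, (x ω j) ^ 2 ∂μ

/-- The Moore–Penrose conditions. -/
def IsMoorePenrose {m n : ℕ} (A : Matrix (Fin m) (Fin n) ℝ)
    (B : Matrix (Fin n) (Fin m) ℝ) : Prop :=
  A * B * A = A ∧ B * A * B = B ∧ (A * B)ᵀ = A * B ∧ (B * A)ᵀ = B * A

/-- The Moore–Penrose pseudoinverse `M^†`. -/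
def mpinv {m n : ℕ} (A : Matrix (Fin m) (Fin n) ℝ) : Matrix (Fin n) (Fin m) ℝ :=
  Classical.epsilon fun B => IsMoorePenrose A B

/-- The symmetric positive semidefinite square root `M^{1/2}` of a PSD matrix. -/
def msqrtM {n : ℕ} (M : Matrix (Fin n) (Fin n) ℝ) : Matrix (Fin n) (Fin n) ℝ :=
  Classical.epsilon fun S => S.PosSemidef ∧ S * S = M

/-- Squared Frobenius norm. -/
def frobSq {m n : ℕ} (A : Matrix (Fin m) (Fin n) ℝ) : ℝ := ∑ i, ∑ j, (A i j) ^ 2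

/-- `(u, v, σ)` is a singular value decomposition of `A`:
`A = ∑ k σ_k u_k v_kᵀ` with orthonormal `u`'s and `v`'s and
nonnegative singular values in decreasing order. -/
def IsSVDOf {m n : ℕ} (A : Matrix (Fin m) (Fin n) ℝ)
    (u : ℕ → Fin m → ℝ) (v : ℕ → Fin n → ℝ) (σ : ℕ → ℝ) : Prop :=
  (∀ k l, k < min m n → l < min m n → u k ⬝ᵥ u l = if k = l then (1 : ℝ) else 0) ∧
  (∀ k l, k < min m n → l < min m n → v k ⬝ᵥ v l = if k = l then (1 : ℝ) else 0) ∧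
  (∀ k, 0 ≤ σ k) ∧ Antitone σ ∧ (∀ k, min m n ≤ k → σ k = 0) ∧
  A = ∑ k ∈ Finset.range (min m n), σ k • vecMulVec (u k) (v k)

/-!
With `A = E_{xz}`, `M = E_{zz}` and the residual `r = x - A M^† z`, bilinearity of the
covariance gives `E_{rr} = E_{xx} - A (A M^†)ᵀ - A M^† Aᵀ + A M^† M (A M^†)ᵀ`. Since `M^†` is
symmetric and `M^† M M^† = M^†`, each of the last three terms is `± A M^† Aᵀ`, so
`‖r‖²_Ω = tr E_{rr} = tr E_{xx} - tr (A M^† Aᵀ)`. For the symmetric square root `S` of `M`,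
uniqueness of the Moore–Penrose inverse gives `(S^†)² = (S²)^† = M^†`, whence
`‖A S^†‖² = tr (A S^† S^† Aᵀ) = tr (A M^† Aᵀ)`.
-/

namespace IsMoorePenrose

variable {m n : ℕ} {A : Matrix (Fin m) (Fin n) ℝ} {B C : Matrix (Fin n) (Fin m) ℝ}

theorem transpose (h : IsMoorePenrose A B) : IsMoorePenrose Aᵀ Bᵀ := by
  obtain ⟨h₁, h₂, h₃, h₄⟩ := h
  refine ⟨?_, ?_, ?_, ?_⟩
  · rw [← transpose_mul, ← transpose_mul, ← Matrix.mul_assoc, h₁]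
  · rw [← transpose_mul, ← transpose_mul, ← Matrix.mul_assoc, h₂]
  · rw [← transpose_mul, h₄, h₄]
  · rw [← transpose_mul, h₃, h₃]

theorem unique (hB : IsMoorePenrose A B) (hC : IsMoorePenrose A C) : B = C := by
  obtain ⟨hB₁, hB₂, hB₃, hB₄⟩ := hB
  obtain ⟨hC₁, hC₂, hC₃, hC₄⟩ := hC
  have hAB : A * B = A * C := by
    calc A * B = (A * C)ᵀ * (A * B)ᵀ := by
          rw [hB₃, hC₃, ← Matrix.mul_assoc, hC₁]
    _ = A * C := by rw [← transpose_mul, ← Matrix.mul_assoc, hB₁, hC₃]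
  have hBA : B * A = C * A := by
    calc B * A = (B * A)ᵀ * (C * A)ᵀ := by
          rw [hB₄, hC₄, Matrix.mul_assoc, ← Matrix.mul_assoc A C, hC₁]
    _ = C * A := by rw [← transpose_mul, Matrix.mul_assoc, ← Matrix.mul_assoc A, hB₁, hC₄]
  rw [← hB₂, hBA, Matrix.mul_assoc, hAB, ← Matrix.mul_assoc, hC₂]

theorem mul_self {S T : Matrix (Fin n) (Fin n) ℝ} (h : IsMoorePenrose S T) (hS : S.IsSymm)
    (hT : T.IsSymm) : IsMoorePenrose (S * S) (T * T) := by
  obtain ⟨h₁, h₂, h₃, h₄⟩ := h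
  have hcomm : S * T = T * S := by rw [← h₃, transpose_mul, hS.eq, hT.eq]
  have hSSTT : S * S * (T * T) = S * T := by
    conv_lhs => rw [← Matrix.mul_assoc, Matrix.mul_assoc S S, hcomm, ← Matrix.mul_assoc, h₁]
  have hTTSS : T * T * (S * S) = T * S := by
    conv_lhs => rw [← Matrix.mul_assoc, Matrix.mul_assoc T T, ← hcomm, ← Matrix.mul_assoc, h₂]
  refine ⟨?_, ?_, ?_, ?_⟩
  · rw [hSSTT, ← Matrix.mul_assoc, h₁]
  · rw [hTTSS, ← Matrix.mul_assoc, h₂]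
  · rw [hSSTT, h₃]
  · rw [hTTSS, h₄]

theorem mpinv_eq (h : IsMoorePenrose A B) : mpinv A = B :=
  (Classical.epsilon_spec (p := fun C => IsMoorePenrose A C) ⟨B, h⟩).unique h

end IsMoorePenrose

namespace Matrix.IsSymm

variable {n : ℕ} {M S : Matrix (Fin n) (Fin n) ℝ}

/-- Invert the nonzero eigenvalues in a spectral decomposition of `M`. -/
theorem exists_isMoorePenrose (hM : M.IsSymm) : ∃ B, IsMoorePenrose M B := by
  have hMh : M.IsHermitian := isHermitian_iff_isSymm.mpr hM
  obtain ⟨V, d, hVV, rfl⟩ : ∃ (V : Matrix (Fin n) (Fin n) ℝ) (d : Fin n → ℝ),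
      star V * V = 1 ∧ M = V * diagonal d * star V :=
    ⟨_, _, mem_unitaryGroup_iff'.mp hMh.eigenvectorUnitary.2, by simpa using hMh.spectral_theorem⟩
  have hstar : star V = Vᵀ := by
    rw [star_eq_conjTranspose, conjTranspose_eq_transpose_of_trivial]
  have hmul (e f : Fin n → ℝ) : V * diagonal e * star V * (V * diagonal f * star V)
      = V * diagonal (e * f) * star V := by
    simp only [Matrix.mul_assoc]
    rw [← Matrix.mul_assoc (star V), hVV, Matrix.one_mul, ← Matrix.mul_assoc (diagonal e),
      diagonal_mul_diagonal]
    rfl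
  have hsymm (e : Fin n → ℝ) : (V * diagonal e * star V)ᵀ = V * diagonal e * star V := by
    rw [hstar, transpose_mul, transpose_mul, transpose_transpose, diagonal_transpose,
      Matrix.mul_assoc]
  refine ⟨V * diagonal d⁻¹ * star V, ?_, ?_, ?_, ?_⟩
  · rw [hmul, hmul]
    congr 3
    funext i
    by_cases h : d i = 0 <;> simp [h]
  · rw [hmul, hmul]
    congr 3
    funext i
    by_cases h : d i = 0 <;> simp [h]
  · rw [hmul, hsymm]
  · rw [hmul, hsymm]

theorem isMoorePenrose_mpinv (hM : M.IsSymm) : IsMoorePenrose M (mpinv M) := by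
  obtain ⟨B, hB⟩ := hM.exists_isMoorePenrose
  rwa [hB.mpinv_eq]

theorem mpinv (hM : M.IsSymm) : (mpinv M).IsSymm := by
  have h := hM.isMoorePenrose_mpinv.transpose
  rw [hM.eq] at h
  exact h.unique hM.isMoorePenrose_mpinv

theorem mpinv_mul_self (hS : S.IsSymm) : _root_.mpinv (S * S) = _root_.mpinv S * _root_.mpinv S :=
  (hS.isMoorePenrose_mpinv.mul_self hS hS.mpinv).mpinv_eq

end Matrix.IsSymm

theorem Matrix.PosSemidef.msqrtM_spec {n : ℕ} {M : Matrix (Fin n) (Fin n) ℝ}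
    (hM : M.PosSemidef) : (msqrtM M).PosSemidef ∧ msqrtM M * msqrtM M = M :=
  open scoped MatrixOrder in
  Classical.epsilon_spec (p := fun S => S.PosSemidef ∧ S * S = M)
    ⟨CFC.sqrt M, (CFC.sqrt_nonneg M).posSemidef, CFC.sqrt_mul_sqrt_self M hM.nonneg⟩

theorem frobSq_eq_trace_mul_transpose {m n : ℕ} (A : Matrix (Fin m) (Fin n) ℝ) :
    frobSq A = (A * Aᵀ).trace := by
  simp only [frobSq, trace, diag_apply, mul_apply, transpose_apply, sq]

theorem frobSq_mul_mpinv_msqrtM {m n : ℕ} (A : Matrix (Fin m) (Fin n) ℝ)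
    {M : Matrix (Fin n) (Fin n) ℝ} (hM : M.PosSemidef) :
    frobSq (A * mpinv (msqrtM M)) = (A * mpinv M * Aᵀ).trace := by
  obtain ⟨hS, hSS⟩ := hM.msqrtM_spec
  have hSsymm : (msqrtM M).IsSymm := isHermitian_iff_isSymm.mp hS.isHermitian
  rw [frobSq_eq_trace_mul_transpose, transpose_mul, hSsymm.mpinv.eq, Matrix.mul_assoc A,
    ← Matrix.mul_assoc (mpinv _), ← hSsymm.mpinv_mul_self, hSS, ← Matrix.mul_assoc]

section Covariance

variable {Ω : Type} [MeasurableSpace Ω] {μ : Measure Ω} {k m n : ℕ}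

theorem MeasureTheory.MemLp.integrable_apply_mul_apply {x : Ω → Fin m → ℝ} {y : Ω → Fin n → ℝ}
    (hx : MemLp x 2 μ) (hy : MemLp y 2 μ) (i : Fin m) (j : Fin n) :
    Integrable (fun ω => x ω i * y ω j) μ :=
  (hx.eval i).integrable_mul (hy.eval j)

theorem MeasureTheory.MemLp.mulVec {p : ENNReal} {x : Ω → Fin n → ℝ} (hx : MemLp x p μ)
    (K : Matrix (Fin m) (Fin n) ℝ) : MemLp (fun ω => K *ᵥ x ω) p μ :=
  MemLp.of_eval fun i => memLp_finsetSum Finset.univ fun j _ => (hx.eval j).const_mul (K i j)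

theorem covM_transpose (x : Ω → Fin m → ℝ) (y : Ω → Fin n → ℝ) :
    (covM μ x y)ᵀ = covM μ y x := by
  ext i j
  simp only [covM, transpose_apply, of_apply, mul_comm]

theorem covM_sub_left {x x' : Ω → Fin m → ℝ} {y : Ω → Fin n → ℝ}
    (hx : MemLp x 2 μ) (hx' : MemLp x' 2 μ) (hy : MemLp y 2 μ) :
    covM μ (fun ω => x ω - x' ω) y = covM μ x y - covM μ x' y := by
  ext i j
  simp only [covM, of_apply, Matrix.sub_apply, Pi.sub_apply, sub_mul]
  exact integral_sub (hx.integrable_apply_mul_apply hy i j) (hx'.integrable_apply_mul_apply hy i j)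

theorem covM_sub_right {x : Ω → Fin m → ℝ} {y y' : Ω → Fin n → ℝ}
    (hx : MemLp x 2 μ) (hy : MemLp y 2 μ) (hy' : MemLp y' 2 μ) :
    covM μ x (fun ω => y ω - y' ω) = covM μ x y - covM μ x y' := by
  rw [← covM_transpose, covM_sub_left hy hy' hx, transpose_sub, covM_transpose, covM_transpose]

theorem covM_mulVec_left {x : Ω → Fin n → ℝ} {y : Ω → Fin k → ℝ}
    (hx : MemLp x 2 μ) (hy : MemLp y 2 μ) (K : Matrix (Fin m) (Fin n) ℝ) :
    covM μ (fun ω => K *ᵥ x ω) y = K * covM μ x y := by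
  ext i j
  simp only [covM, of_apply, mul_apply, mulVec, dotProduct, Finset.sum_mul, mul_assoc]
  rw [integral_finsetSum _ fun l _ => (hx.integrable_apply_mul_apply hy l j).const_mul _]
  simp only [integral_const_mul]

theorem covM_mulVec_right {x : Ω → Fin k → ℝ} {y : Ω → Fin n → ℝ}
    (hx : MemLp x 2 μ) (hy : MemLp y 2 μ) (K : Matrix (Fin m) (Fin n) ℝ) :
    covM μ x (fun ω => K *ᵥ y ω) = covM μ x y * Kᵀ := by
  rw [← covM_transpose, covM_mulVec_left hy hx, transpose_mul, covM_transpose]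

theorem trace_covM_self {x : Ω → Fin m → ℝ} (hx : MemLp x 2 μ) :
    (covM μ x x).trace = sqnormOm μ x := by
  simp only [trace, diag_apply, covM, of_apply, sqnormOm, sq]
  exact (integral_finsetSum _ fun i _ => hx.integrable_apply_mul_apply hx i i).symm

theorem posSemidef_covM_self {x : Ω → Fin m → ℝ} (hx : MemLp x 2 μ) :
    (covM μ x x).PosSemidef := by
  refine posSemidef_iff_dotProduct_mulVec.mpr ⟨?_, fun v => ?_⟩
  · rw [isHermitian_iff_isSymm]
    exact covM_transpose x x
  · set R := replicateRow (Fin 1) v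
    have h : covM μ (fun ω => R *ᵥ x ω) (fun ω => R *ᵥ x ω) = R * covM μ x x * Rᵀ := by
      rw [covM_mulVec_left hx (hx.mulVec R), covM_mulVec_right hx hx, Matrix.mul_assoc]
    have hquad : star v ⬝ᵥ covM μ x x *ᵥ v = (R * covM μ x x * Rᵀ) 0 0 := by
      simp only [R, star_trivial, dotProduct, mulVec, mul_apply, replicateRow_apply,
        transpose_apply, Finset.sum_mul, Finset.mul_sum]
      rw [Finset.sum_comm]
      exact Finset.sum_congr rfl fun _ _ => Finset.sum_congr rfl fun _ _ => by ring
    rw [hquad, ← h]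
    exact integral_nonneg fun ω => mul_self_nonneg _

theorem covM_sub_mulVec {x : Ω → Fin m → ℝ} {z : Ω → Fin n → ℝ}
    (hx : MemLp x 2 μ) (hz : MemLp z 2 μ) (K : Matrix (Fin m) (Fin n) ℝ) :
    covM μ (fun ω => x ω - K *ᵥ z ω) (fun ω => x ω - K *ᵥ z ω)
      = covM μ x x - covM μ x z * Kᵀ - K * covM μ z x + K * covM μ z z * Kᵀ := by
  have hKz := hz.mulVec K
  have hr : MemLp (fun ω => x ω - K *ᵥ z ω) 2 μ := hx.sub hKz
  rw [covM_sub_left hx hKz hr, covM_sub_right hx hx hKz, covM_sub_right hKz hx hKz,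
    covM_mulVec_right hx hz, covM_mulVec_left hz hx, covM_mulVec_left hz hKz,
    covM_mulVec_right hz hz, Matrix.mul_assoc]
  abel

end Covariance

theorem stmt14_general {Ω : Type} [MeasurableSpace Ω] (μ : Measure Ω)
    {m q : ℕ} (x : Ω → Fin m → ℝ) (z : Ω → Fin q → ℝ)
    (hx : MemLp x 2 μ) (hz : MemLp z 2 μ) :
    sqnormOm μ (fun ω => x ω - (covM μ x z * mpinv (covM μ z z)) *ᵥ z ω)
      = (covM μ x x).trace - frobSq (covM μ x z * mpinv (msqrtM (covM μ z z))) := by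
  set A := covM μ x z
  set M := covM μ z z
  have hM : M.PosSemidef := posSemidef_covM_self hz
  have hMsymm : M.IsSymm := isHermitian_iff_isSymm.mp hM.isHermitian
  have hBt : (A * mpinv M)ᵀ = mpinv M * Aᵀ := by rw [transpose_mul, hMsymm.mpinv.eq]
  have hMB : A * mpinv M * M * (mpinv M * Aᵀ) = A * mpinv M * Aᵀ := by
    conv_rhs => rw [← hMsymm.isMoorePenrose_mpinv.2.1]
    simp only [Matrix.mul_assoc]
  have hres : MemLp (fun ω => x ω - (A * mpinv M) *ᵥ z ω) 2 μ := hx.sub (hz.mulVec _)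
  rw [← trace_covM_self hres, covM_sub_mulVec hx hz, ← covM_transpose x z,
    frobSq_mul_mpinv_msqrtM A hM, hBt, hMB, trace_add, trace_sub, trace_sub, Matrix.mul_assoc]
  ring

/-- `‖x − E_{xz}(E_{zz})^† z‖²_Ω = tr(E_{xx}) − ‖E_{xz}(E_{zz}^{1/2})^†‖²`. -/
theorem stmt14 {Ω : Type} [MeasurableSpace Ω] (μ : Measure Ω) [IsProbabilityMeasure μ]
    {m q : ℕ} (x : Ω → Fin m → ℝ) (z : Ω → Fin q → ℝ)
    (hx : MemLp x 2 μ) (hz : MemLp z 2 μ) :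
    sqnormOm μ (fun ω => x ω - (covM μ x z * mpinv (covM μ z z)) *ᵥ z ω)
      = (covM μ x x).trace - frobSq (covM μ x z * mpinv (msqrtM (covM μ z z))) :=
  stmt14_general μ x z hx hz
end
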